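/- Define the bipartite assemblage τ_{b|x} := (1/4)[ I + ((−1)^b/√2)( Z + x X ) ] for b, x ∈ {0,1}. Then τ is steerable: there do not exist a finite set Λ, weights P_λ ≥ 0 with ∑_λ P_λ = 1, density matrices ϱ_λ (positive semidefinite 2×2 complex matrices with trace 1), and numbers P(b|x,λ) ≥ 0 with ∑_b P(b|x,λ) = 1 for all x, λ, such that τ_{b|x} = ∑_λ P_λ P(b|x,λ) ϱ_λ for all b, x. -/

import Mathlib

open Matrix BigOperators ComplexOrder

noncomputable section

/-- Pauli X matrix. -/
def X : Matrix (Fin 2) (Fin 2) ℂ := !![0, 1; 1, 0]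

/-- Pauli Z matrix. -/
def Z : Matrix (Fin 2) (Fin 2) ℂ := !![1, 0; 0, -1]

/-- The wired bipartite assemblage τ_{b|x}. -/
def τ : Fin 2 → Fin 2 → Matrix (Fin 2) (Fin 2) ℂ := fun b x =>
  (1 / 4 : ℝ) • ((1 : Matrix (Fin 2) (Fin 2) ℂ) +
    ((-1 : ℝ) ^ (b : ℕ) / Real.sqrt 2) • (Z + ((x : ℕ) : ℝ) • X))

/-- Auxiliary: the sandwiched bilinear form is linear over real-weighted sums of matrices. -/
lemma dot_sum_smul {n : ℕ} (c : Fin n → ℝ) (A : Fin n → Matrix (Fin 2) (Fin 2) ℂ)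
    (u v : Fin 2 → ℂ) :
    u ⬝ᵥ (∑ l, c l • A l) *ᵥ v = ∑ l, (c l : ℂ) * (u ⬝ᵥ A l *ᵥ v) := by
  let g : Matrix (Fin 2) (Fin 2) ℂ →+ ℂ :=
    { toFun := fun M => u ⬝ᵥ M *ᵥ v
      map_zero' := by simp
      map_add' := fun M N => by rw [Matrix.add_mulVec, dotProduct_add] }
  have : u ⬝ᵥ (∑ l, c l • A l) *ᵥ v = g (∑ l, c l • A l) := rfl
  rw [this, map_sum]
  refine Finset.sum_congr rfl fun l _ => ?_
  show u ⬝ᵥ (c l • A l) *ᵥ v = _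
  rw [Matrix.smul_mulVec, dotProduct_smul, Complex.real_smul]

/-- The wired assemblage τ is steerable: it admits no bipartite LHS model. -/
theorem tau_steerable :
    ¬ ∃ (n : ℕ) (P : Fin n → ℝ) (ϱ : Fin n → Matrix (Fin 2) (Fin 2) ℂ)
        (q : Fin 2 → Fin 2 → Fin n → ℝ),
        (∀ l, 0 ≤ P l) ∧ (∑ l, P l = 1) ∧
        (∀ l, (ϱ l).PosSemidef) ∧ (∀ l, (ϱ l).trace = 1) ∧
        (∀ b x l, 0 ≤ q b x l) ∧ (∀ x l, ∑ b, q b x l = 1) ∧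
        (∀ b x, τ b x = ∑ l, (P l * q b x l) • ϱ l) := by
  rintro ⟨n, P, ϱ, q, hP, hPsum, hpsd, htr, hq, hqsum, hτ⟩
  have hs2 : Real.sqrt 2 * Real.sqrt 2 = 2 := Real.mul_self_sqrt (by norm_num)
  have hs0 : Real.sqrt 2 ≠ 0 := by positivity
  set v : Fin 2 → ℂ := ![1, ((-(Real.sqrt 2 + 1) : ℝ) : ℂ)] with hv
  set w : Fin 2 → ℂ := ![1, (((Real.sqrt 2 - 1) : ℝ) : ℂ)] with hw
  -- v is in the kernel of τ 0 1, w is in the kernel of τ 1 1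
  have hA : star v ⬝ᵥ (τ 0 1) *ᵥ v = 0 := by
    simp [τ, Z, X, hv, Matrix.mulVec, dotProduct, Fin.sum_univ_two, Pi.star_apply, Matrix.vecHead, Matrix.vecTail,
      Matrix.smul_apply, Matrix.add_apply, Matrix.one_apply, Complex.ext_iff,
      Complex.real_smul]
    linear_combination (-1/4 - Real.sqrt 2/8) * hs2
  have hB : star w ⬝ᵥ (τ 1 1) *ᵥ w = 0 := by
    simp [τ, Z, X, hw, Matrix.mulVec, dotProduct, Fin.sum_univ_two, Pi.star_apply, Matrix.vecHead, Matrix.vecTail,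
      Matrix.smul_apply, Matrix.add_apply, Matrix.one_apply, Complex.ext_iff,
      Complex.real_smul]
    field_simp
    linear_combination (Real.sqrt 2 - 1) * hs2
  -- but the cross matrix element of τ 0 0 does not vanish
  have hC : star v ⬝ᵥ (τ 0 0) *ᵥ w ≠ 0 := by
    simp [τ, Z, X, hv, hw, Matrix.mulVec, dotProduct, Fin.sum_univ_two, Pi.star_apply, Matrix.vecHead, Matrix.vecTail,
      Matrix.smul_apply, Matrix.add_apply, Matrix.one_apply, Complex.ext_iff,
      Complex.real_smul]
    intro h
    have hpos : 0 < Real.sqrt 2 := Real.sqrt_pos.mpr (by norm_num)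
    nlinarith [hs2, hpos]
  -- for each hidden variable, either the weight vanishes or the state kills the vector
  have key : ∀ (u : Fin 2 → ℂ) (b : Fin 2), star u ⬝ᵥ (τ b 1) *ᵥ u = 0 →
      ∀ l, P l * q b 1 l = 0 ∨ ϱ l *ᵥ u = 0 := by
    intro u b h0 l
    rw [hτ b 1, dot_sum_smul] at h0
    have hterm : ∀ l ∈ Finset.univ,
        (0:ℂ) ≤ ((P l * q b 1 l : ℝ) : ℂ) * (star u ⬝ᵥ ϱ l *ᵥ u) := by
      intro l _
      apply mul_nonneg
      · rw [Complex.zero_le_real]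
        exact mul_nonneg (hP l) (hq b 1 l)
      · exact (hpsd l).dotProduct_mulVec_nonneg u
    have := (Finset.sum_eq_zero_iff_of_nonneg hterm).mp h0 l (Finset.mem_univ l)
    rcases mul_eq_zero.mp this with h | h
    · left; exact_mod_cast h
    · right; exact ((hpsd l).dotProduct_mulVec_zero_iff u).mp h
  have keyv := key v 0 hA
  have keyw := key w 1 hB
  -- conclude that every cross term vanishes, contradicting hC
  apply hC
  rw [hτ 0 0, dot_sum_smul]
  refine Finset.sum_eq_zero fun l _ => ?_
  rcases keyv l with h | h
  · rcases keyw l with h' | h'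
    · -- both weights vanish, so P l = 0 since q 0 1 l + q 1 1 l = 1
      have hsum := hqsum 1 l
      rw [Fin.sum_univ_two] at hsum
      have hP0 : P l = 0 := by nlinarith [hq 0 1 l, hq 1 1 l, hP l]
      simp [hP0]
    · rw [h', dotProduct_zero, mul_zero]
  · have hherm : (ϱ l)ᴴ = ϱ l := (hpsd l).1
    have hz : star v ⬝ᵥ ϱ l *ᵥ w = 0 := by
      rw [dotProduct_mulVec, ← hherm, ← Matrix.star_mulVec, h]
      simp
    rw [hz, mul_zero]
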